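/- arXiv:2212.05260 — 2 statements merged into one kernel-verified Lean document; each statement's English description precedes it below -/
import Mathlib

section
/- Let Y ~ Exp(1) and C ~ Exp(1) be independent, T = min(Y,C), Δ = 𝟙(Y ≤ C). Define the SCRPS expected penalty S(μ) := E[∫_0^T F_μ²(τ) dτ + Δ·∫_T^∞ S_μ²(τ) dτ], where F_μ, S_μ are the CDF and survival function of Exp(μ). Then S(1.5) < S(1), i.e., the SCRPS is not outcome-independent proper. -/
/-!
If `Y, C` are independent `Exp(1)`, then integrating out the larger of the two variables first
(Tonelli) shows `E[f(Y) 𝟙(Y ≤ C) + g(C) 𝟙(C < Y)] = ∫₀^∞ e^{-2t} (f t + g t) dt`: in effect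
`T = min(Y, C) ~ Exp(2)` and `Δ` is an independent fair coin. With the closed forms
`∫₀^t F_μ² = t - 2(1 - e^{-μt})/μ + (1 - e^{-2μt})/(2μ)` and `∫_t^∞ S_μ² = e^{-2μt}/(2μ)`
this gives `S(μ) = (2μ³ + μ + 2)/(4μ(μ+1)(μ+2))`, whence `S(3/2) = 0.195… < 5/24 = S(1)`.
-/

open MeasureTheory ProbabilityTheory Set Real
open scoped ENNReal

lemma integrableOn_mul_exp_neg_mul {r : ℝ} (hr : 0 < r) :
    IntegrableOn (fun t => t * exp (-(r * t))) (Ioi 0) := by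
  refine (integrableOn_rpow_mul_exp_neg_mul_rpow (s := 1) (p := 1) (by norm_num) one_pos hr
    ).congr_fun (fun t _ => ?_) measurableSet_Ioi
  simp

lemma integral_mul_exp_neg_mul {r : ℝ} (hr : 0 < r) :
    ∫ t in Ioi 0, t * exp (-(r * t)) = (r ^ 2)⁻¹ := by
  have := integral_rpow_mul_exp_neg_mul_Ioi (a := 2) two_pos hr
  norm_num at this
  exact this

lemma integral_exp_mul_Ioi_zero {a : ℝ} (ha : a < 0) : ∫ t in Ioi 0, exp (a * t) = -1 / a := by
  simp [integral_exp_mul_Ioi ha]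

lemma measurable_ite_fst_le_snd {β : Type*} [MeasurableSpace β] {f g : ℝ → β}
    (hf : Measurable f) (hg : Measurable g) :
    Measurable fun p : ℝ × ℝ => if p.1 ≤ p.2 then f p.1 else g p.2 :=
  Measurable.ite (measurableSet_le measurable_fst measurable_snd)
    (hf.comp measurable_fst) (hg.comp measurable_snd)

namespace ProbabilityTheory

variable {r s : ℝ}

lemma lintegral_expMeasure (f : ℝ → ℝ≥0∞) :
    ∫⁻ x, f x ∂expMeasure r = ∫⁻ x in Ioi 0, ENNReal.ofReal (r * exp (-(r * x))) * f x := by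
  rw [show expMeasure r = volume.withDensity (exponentialPDF r) from rfl,
    lintegral_withDensity_eq_lintegral_mul_non_measurable _ (f := exponentialPDF r)
    (measurable_exponentialPDFReal r).ennreal_ofReal (ae_of_all _ fun _ => ENNReal.ofReal_lt_top),
    ← lintegral_indicator measurableSet_Ioi]
  refine lintegral_congr_ae ?_
  filter_upwards [Measure.ae_ne volume 0] with x hx
  rcases hx.lt_or_gt with hx | hx
  · simp [hx.not_gt, exponentialPDF_of_neg hx]
  · simp [hx, exponentialPDF_of_nonneg hx.le]

lemma expMeasure_Ioi (hr : 0 < r) {x : ℝ} (hx : 0 ≤ x) :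
    expMeasure r (Ioi x) = ENNReal.ofReal (exp (-(r * x))) := by
  have := isProbabilityMeasure_expMeasure hr
  have hcdf := ofReal_cdf (expMeasure r) x
  rw [cdf_expMeasure_eq hr, if_pos hx] at hcdf
  rw [← compl_Iic, prob_compl_eq_one_sub measurableSet_Iic, ← hcdf, ← ENNReal.ofReal_one,
    ← ENNReal.ofReal_sub _ (by simp only [sub_nonneg, exp_le_one_iff, neg_nonpos]; positivity)]
  ring_nf

instance nullSingletonClass_expMeasure : NullSingletonClass (expMeasure r) := by
  unfold expMeasure gammaMeasure; infer_instance

instance sFinite_expMeasure : SFinite (expMeasure r) := by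
  unfold expMeasure gammaMeasure; infer_instance

lemma expMeasure_Ici (hr : 0 < r) {x : ℝ} (hx : 0 ≤ x) :
    expMeasure r (Ici x) = ENNReal.ofReal (exp (-(r * x))) := by
  rw [measure_congr Ioi_ae_eq_Ici.symm, expMeasure_Ioi hr hx]

lemma ae_nonneg_expMeasure : ∀ᵐ x ∂expMeasure r, 0 ≤ x := by
  rw [ae_iff]
  simp only [not_le]
  change expMeasure r (Iio 0) = 0
  rw [expMeasure, gammaMeasure, withDensity_apply _ measurableSet_Iio]
  exact lintegral_exponentialPDF_of_nonpos le_rfl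

lemma lintegral_mul_exp_expMeasure (f : ℝ → ℝ≥0∞) :
    ∫⁻ x, f x * ENNReal.ofReal (exp (-(s * x))) ∂expMeasure r =
      ∫⁻ x in Ioi 0, ENNReal.ofReal (r * exp (-((r + s) * x))) * f x := by
  rw [lintegral_expMeasure]
  refine lintegral_congr fun x => ?_
  rw [mul_comm (f x), ← mul_assoc, ← ENNReal.ofReal_mul' (exp_pos _).le, mul_assoc, ← exp_add]
  ring_nf

lemma lintegral_mul_expMeasure_Ici (hs : 0 < s) (f : ℝ → ℝ≥0∞) :
    ∫⁻ x, f x * expMeasure s (Ici x) ∂expMeasure r =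
      ∫⁻ x in Ioi 0, ENNReal.ofReal (r * exp (-((r + s) * x))) * f x := by
  rw [← lintegral_mul_exp_expMeasure]
  refine lintegral_congr_ae ?_
  filter_upwards [ae_nonneg_expMeasure] with x hx
  rw [expMeasure_Ici hs hx]

lemma lintegral_mul_expMeasure_Ioi (hs : 0 < s) (f : ℝ → ℝ≥0∞) :
    ∫⁻ x, f x * expMeasure s (Ioi x) ∂expMeasure r =
      ∫⁻ x in Ioi 0, ENNReal.ofReal (r * exp (-((r + s) * x))) * f x := by
  simp only [measure_congr (Ioi_ae_eq_Ici (μ := expMeasure s)), lintegral_mul_expMeasure_Ici hs]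

theorem lintegral_prod_expMeasure_ite (hr : 0 < r) (hs : 0 < s) {f g : ℝ → ℝ≥0∞}
    (hf : Measurable f) (hg : Measurable g) :
    ∫⁻ p, (if p.1 ≤ p.2 then f p.1 else g p.2) ∂(expMeasure r).prod (expMeasure s) =
      ∫⁻ t in Ioi 0, ENNReal.ofReal (r * exp (-((r + s) * t))) * f t +
        ENNReal.ofReal (s * exp (-((r + s) * t))) * g t := by
  set F := {p : ℝ × ℝ | p.1 ≤ p.2}.indicator fun p => f p.1
  set G := {p : ℝ × ℝ | p.2 < p.1}.indicator fun p => g p.2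
  have hF : Measurable F :=
    (hf.comp measurable_fst).indicator (measurableSet_le measurable_fst measurable_snd)
  have hG : Measurable G :=
    (hg.comp measurable_snd).indicator (measurableSet_lt measurable_snd measurable_fst)
  have hsplit : (fun p : ℝ × ℝ => if p.1 ≤ p.2 then f p.1 else g p.2) = fun p => F p + G p := by
    ext p
    by_cases h : p.1 ≤ p.2 <;> simp [F, G, h, not_le.mp]
  have hF_inner : ∀ y, ∫⁻ c, F (y, c) ∂expMeasure s = f y * expMeasure s (Ici y) := fun y => by
    rw [← lintegral_indicator_const measurableSet_Ici]
    rfl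
  have hG_inner : ∀ c, ∫⁻ y, G (y, c) ∂expMeasure r = g c * expMeasure r (Ioi c) := fun c => by
    rw [← lintegral_indicator_const measurableSet_Ioi]
    rfl
  rw [hsplit, lintegral_add_left hF, lintegral_prod _ hF.aemeasurable,
    lintegral_prod_symm _ hG.aemeasurable]
  simp only [hF_inner, hG_inner, lintegral_mul_expMeasure_Ici hs, lintegral_mul_expMeasure_Ioi hr]
  rw [lintegral_add_left (by fun_prop), add_comm s r]

theorem integral_prod_expMeasure_ite (hr : 0 < r) (hs : 0 < s) {f g : ℝ → ℝ}
    (hf : Measurable f) (hg : Measurable g) (hf₀ : ∀ t, 0 ≤ t → 0 ≤ f t)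
    (hg₀ : ∀ t, 0 ≤ t → 0 ≤ g t) :
    ∫ p, (if p.1 ≤ p.2 then f p.1 else g p.2) ∂(expMeasure r).prod (expMeasure s) =
      ∫ t in Ioi 0, exp (-((r + s) * t)) * (r * f t + s * g t) := by
  have hnonneg : 0 ≤ᵐ[(expMeasure r).prod (expMeasure s)]
      fun p : ℝ × ℝ => if p.1 ≤ p.2 then f p.1 else g p.2 := by
    filter_upwards [Measure.quasiMeasurePreserving_fst.ae ae_nonneg_expMeasure,
      Measure.quasiMeasurePreserving_snd.ae ae_nonneg_expMeasure] with p h₁ h₂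
    split_ifs
    exacts [hf₀ _ h₁, hg₀ _ h₂]
  have hnonneg' : 0 ≤ᵐ[volume.restrict (Ioi 0)]
      fun t => exp (-((r + s) * t)) * (r * f t + s * g t) := by
    filter_upwards [ae_restrict_mem measurableSet_Ioi] with t ht
    have := hf₀ t (le_of_lt ht)
    have := hg₀ t (le_of_lt ht)
    positivity
  rw [integral_eq_lintegral_of_nonneg_ae hnonneg
      (measurable_ite_fst_le_snd hf hg).aestronglyMeasurable,
    integral_eq_lintegral_of_nonneg_ae hnonneg' (by fun_prop)]
  simp only [apply_ite ENNReal.ofReal]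
  rw [lintegral_prod_expMeasure_ite hr hs hf.ennreal_ofReal hg.ennreal_ofReal]
  congr 1
  refine setLIntegral_congr_fun measurableSet_Ioi fun t ht => ?_
  have := hf₀ t (le_of_lt ht)
  have := hg₀ t (le_of_lt ht)
  rw [← ENNReal.ofReal_mul (by positivity), ← ENNReal.ofReal_mul (by positivity),
    ← ENNReal.ofReal_add (by positivity) (by positivity)]
  ring_nf

lemma expMeasure_apply (hr : 0 < r) {A : Set ℝ} (hA : MeasurableSet A) :
    expMeasure r A = ENNReal.ofReal (∫ x in A ∩ Ioi 0, r * exp (-(r * x))) := by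
  have hint : IntegrableOn (fun x => r * exp (-(r * x))) (A ∩ Ioi 0) := by
    refine IntegrableOn.mono_set ?_ inter_subset_right
    simpa [IntegrableOn] using (integrableOn_exp_mul_Ioi (neg_lt_zero.mpr hr) 0).const_mul r
  rw [← lintegral_indicator_one hA, lintegral_expMeasure, ofReal_integral_eq_lintegral_ofReal
    hint (ae_of_all _ fun x => by positivity), ← Measure.restrict_restrict hA,
    ← lintegral_indicator hA]
  congr 1
  ext x
  by_cases hx : x ∈ A <;> simp [hx]

lemma map_eq_expMeasure_one {Ω : Type*} [MeasurableSpace Ω] {P : Measure Ω} [IsFiniteMeasure P]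
    {X : Ω → ℝ} (hX : Measurable X)
    (hlaw : ∀ A : Set ℝ, MeasurableSet A → (P (X ⁻¹' A)).toReal = ∫ u in A ∩ Ioi 0, exp (-u)) :
    P.map X = expMeasure 1 := by
  ext A hA
  rw [Measure.map_apply hX hA, expMeasure_apply one_pos hA, ← ENNReal.ofReal_toReal
    (measure_ne_top P _), hlaw A hA]
  simp

end ProbabilityTheory

/-- The SCRPS loss `L(Exp(μ), t, δ)` at the observation `T = t`, `Δ = δ`. -/
noncomputable def scrpsLoss (μ t δ : ℝ) : ℝ :=
  (∫ τ in (0:ℝ)..t, (1 - exp (-μ * τ)) ^ 2) + δ * ∫ τ in Ioi t, (exp (-μ * τ)) ^ 2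

lemma integral_one_sub_exp_sq {μ : ℝ} (hμ : μ ≠ 0) (t : ℝ) :
    ∫ τ in (0:ℝ)..t, (1 - exp (-μ * τ)) ^ 2 =
      t - 2 * (1 - exp (-μ * t)) / μ + (1 - exp (-μ * t) ^ 2) / (2 * μ) := by
  have hderiv : ∀ τ, HasDerivAt (fun τ => τ + 2 * exp (-μ * τ) / μ - exp (-μ * τ) ^ 2 / (2 * μ))
      ((1 - exp (-μ * τ)) ^ 2) τ := fun τ => by
    have he : HasDerivAt (fun τ => exp (-μ * τ)) (-μ * exp (-μ * τ)) τ := by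
      simpa [mul_comm] using ((hasDerivAt_id τ).const_mul (-μ)).exp
    refine (((hasDerivAt_id τ).add ((he.const_mul 2).div_const μ)).sub
      ((he.pow 2).div_const (2 * μ))).congr_deriv ?_
    field_simp
    ring
  rw [intervalIntegral.integral_eq_sub_of_hasDerivAt (fun τ _ => hderiv τ)
    (by apply Continuous.intervalIntegrable; fun_prop)]
  simp only [mul_zero, exp_zero]
  ring

lemma integral_Ioi_exp_sq {μ : ℝ} (hμ : 0 < μ) (t : ℝ) :
    ∫ τ in Ioi t, (exp (-μ * τ)) ^ 2 = exp (-μ * t) ^ 2 / (2 * μ) := by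
  have hsq : ∀ τ, exp (-μ * τ) ^ 2 = exp (-(2 * μ) * τ) := fun τ => by
    rw [← exp_nat_mul]; ring_nf
  simp only [hsq]
  rw [integral_exp_mul_Ioi (by linarith)]
  field_simp

lemma scrpsLoss_eq {μ : ℝ} (hμ : 0 < μ) (t δ : ℝ) :
    scrpsLoss μ t δ = t - 2 * (1 - exp (-μ * t)) / μ + (1 - exp (-μ * t) ^ 2) / (2 * μ) +
      δ * (exp (-μ * t) ^ 2 / (2 * μ)) := by
  rw [scrpsLoss, integral_one_sub_exp_sq hμ.ne', integral_Ioi_exp_sq hμ]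

lemma continuous_scrpsLoss {μ : ℝ} (hμ : 0 < μ) (δ : ℝ) :
    Continuous fun t => scrpsLoss μ t δ := by
  simp only [scrpsLoss_eq hμ]
  fun_prop

lemma scrpsLoss_nonneg (μ : ℝ) {t δ : ℝ} (ht : 0 ≤ t) (hδ : 0 ≤ δ) : 0 ≤ scrpsLoss μ t δ :=
  add_nonneg (intervalIntegral.integral_nonneg ht fun _ _ => sq_nonneg _)
    (mul_nonneg hδ (setIntegral_nonneg measurableSet_Ioi fun _ _ => sq_nonneg _))

lemma scrpsLoss_min (μ y c : ℝ) :
    scrpsLoss μ (min y c) (if y ≤ c then 1 else 0) =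
      if y ≤ c then scrpsLoss μ y 1 else scrpsLoss μ c 0 := by
  split_ifs with h
  · rw [min_eq_left h]
  · rw [min_eq_right (not_le.mp h).le]

lemma integral_Ioi_exp_mul_scrpsLoss {μ : ℝ} (hμ : 0 < μ) :
    ∫ t in Ioi 0, exp (-(2 * t)) * (scrpsLoss μ t 1 + scrpsLoss μ t 0) =
      (2 * μ ^ 3 + μ + 2) / (4 * μ * (μ + 1) * (μ + 2)) := by
  have hexp : ∀ t, exp (-(2 * t)) * (scrpsLoss μ t 1 + scrpsLoss μ t 0) =
      2 * (t * exp (-(2 * t))) + (-3 / μ) * exp (-2 * t) + 4 / μ * exp (-(μ + 2) * t) +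
        (-1 / (2 * μ)) * exp (-(2 * μ + 2) * t) := fun t => by
    have h₁ : exp (-(μ + 2) * t) = exp (-μ * t) * exp (-(2 * t)) := by rw [← exp_add]; ring_nf
    have h₂ : exp (-(2 * μ + 2) * t) = exp (-μ * t) ^ 2 * exp (-(2 * t)) := by
      rw [← exp_nat_mul, ← exp_add]; ring_nf
    rw [h₁, h₂, scrpsLoss_eq hμ, scrpsLoss_eq hμ, show -2 * t = -(2 * t) by ring]
    field_simp
    ring
  have i₁ := (integrableOn_mul_exp_neg_mul two_pos).const_mul 2
  have i₂ := (integrableOn_exp_mul_Ioi (a := -2) (by norm_num) 0).const_mul (-3 / μ)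
  have i₃ := (integrableOn_exp_mul_Ioi (a := -(μ + 2)) (by linarith) 0).const_mul (4 / μ)
  have i₄ :=
    (integrableOn_exp_mul_Ioi (a := -(2 * μ + 2)) (by linarith) 0).const_mul (-1 / (2 * μ))
  simp only [hexp]
  rw [integral_add (by exact (i₁.add i₂).add i₃) i₄, integral_add (by exact i₁.add i₂) i₃,
    integral_add i₁ i₂, integral_const_mul, integral_const_mul, integral_const_mul,
    integral_const_mul,
    integral_mul_exp_neg_mul two_pos, integral_exp_mul_Ioi_zero (by norm_num),
    integral_exp_mul_Ioi_zero (by linarith), integral_exp_mul_Ioi_zero (by linarith)]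
  field_simp
  ring

theorem integral_prod_expMeasure_one_scrpsLoss {μ : ℝ} (hμ : 0 < μ) :
    ∫ p, (if p.1 ≤ p.2 then scrpsLoss μ p.1 1 else scrpsLoss μ p.2 0)
        ∂(expMeasure 1).prod (expMeasure 1) =
      (2 * μ ^ 3 + μ + 2) / (4 * μ * (μ + 1) * (μ + 2)) := by
  rw [integral_prod_expMeasure_ite one_pos one_pos (continuous_scrpsLoss hμ 1).measurable
    (continuous_scrpsLoss hμ 0).measurable (fun _ ht => scrpsLoss_nonneg μ ht zero_le_one)
    (fun _ ht => scrpsLoss_nonneg μ ht le_rfl)]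
  simpa only [one_add_one_eq_two, one_mul] using integral_Ioi_exp_mul_scrpsLoss hμ

/-- Improperness of the SCRPS: with `Y, C` i.i.d. `Exp(1)` independent,
`T = min(Y,C)`, `Δ = 𝟙(Y ≤ C)`, and
`S(μ) := E[∫_0^T F_μ²(τ) dτ + Δ ∫_T^∞ S_μ²(τ) dτ]` (for `Exp(μ)` predictions),
we have `S(1.5) < S(1)`: the wrong prediction beats the truth. -/
theorem stmt_5 {Ω : Type*} [MeasureSpace Ω] [IsProbabilityMeasure (ℙ : Measure Ω)]
    (Y C : Ω → ℝ) (hY : Measurable Y) (hC : Measurable C)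
    (hindep : IndepFun Y C ℙ)
    (hlawY : ∀ s : Set ℝ, MeasurableSet s →
      (ℙ (Y ⁻¹' s)).toReal = ∫ u in s ∩ Ioi (0:ℝ), exp (-u))
    (hlawC : ∀ s : Set ℝ, MeasurableSet s →
      (ℙ (C ⁻¹' s)).toReal = ∫ u in s ∩ Ioi (0:ℝ), exp (-u))
    (S : ℝ → ℝ)
    (hS : ∀ μ : ℝ, S μ =
      ∫ ω, ((∫ τ in (0:ℝ)..(min (Y ω) (C ω)), (1 - exp (-μ * τ)) ^ 2)
        + (if Y ω ≤ C ω then (1:ℝ) else 0)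
          * ∫ τ in Ioi (min (Y ω) (C ω)), (exp (-μ * τ)) ^ 2) ∂ℙ) :
    S (3/2) < S 1 := by
  have hlaw : Measure.map (fun ω => (Y ω, C ω)) ℙ = (expMeasure 1).prod (expMeasure 1) := by
    rw [(indepFun_iff_map_prod_eq_prod_map_map hY.aemeasurable hC.aemeasurable).mp hindep,
      map_eq_expMeasure_one hY hlawY, map_eq_expMeasure_one hC hlawC]
  have hS_eq : ∀ μ, 0 < μ → S μ = (2 * μ ^ 3 + μ + 2) / (4 * μ * (μ + 1) * (μ + 2)) := by
    intro μ hμ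
    rw [hS]
    change ∫ ω, scrpsLoss μ (min (Y ω) (C ω)) (if Y ω ≤ C ω then 1 else 0) ∂ℙ = _
    simp only [scrpsLoss_min]
    rw [← integral_prod_expMeasure_one_scrpsLoss hμ, ← hlaw, integral_map
      (hY.prodMk hC).aemeasurable (measurable_ite_fst_le_snd
        (continuous_scrpsLoss hμ 1).measurable (continuous_scrpsLoss hμ 0).measurable
        ).aestronglyMeasurable]
  rw [hS_eq _ (by norm_num), hS_eq 1 one_pos]
  norm_num
end

section
/- Let Y ⊥ C be nonnegative absolutely continuous random variables, T = min(Y,C), Δ = 𝟙(Y ≤ C). Then the expected RISBS with true weight S_C equals the expected (uncensored) integrated Brier score: E[Δ·∫_0^{τ*}(𝟙(T ≤ τ) − F_p(τ))² dτ / S_C(T)] = E[∫_0^{τ*}(𝟙(Y ≤ τ) − F_p(τ))² dτ]. -/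
/-!
Write `g y` for the integrated Brier score of an uncensored observation `y`. On the event
`Y ≤ C` we have `T = Y`, so the RISBS equals `𝟙(Y ≤ C) g(Y) / S_C(Y)`. By independence the
law of `(Y, C)` is a product measure, and integrating out `C` first turns `𝟙(Y ≤ C)` into
`P(C ≥ Y) = S_C(Y)` (as `C` has no atoms), which cancels the weight and leaves `E[g(Y)]`.

The integrated Brier score is Borel in `y` with no regularity assumption on `F_p`: splitting
the integral at `y`, it is a monotone plus an antitone function of `y` on the order-connected
set where both pieces are integrable, and the junk value `0` elsewhere.
-/

open MeasureTheory ProbabilityTheory Set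

section IndicatorMonotoneOn

variable {α β : Type*} [TopologicalSpace α] [MeasurableSpace α] [BorelSpace α] [LinearOrder α]
  [OrderTopology α] [SecondCountableTopology α] [Zero α]
  [TopologicalSpace β] [MeasurableSpace β] [BorelSpace β] [LinearOrder β]
  [OrderClosedTopology β] {s : Set β} {f : β → α}

theorem Set.OrdConnected.measurable_indicator_of_monotoneOn (hs : s.OrdConnected)
    (hf : MonotoneOn f s) : Measurable (s.indicator f) := by
  refine measurable_of_restrict_of_restrict_compl hs.measurableSet ?_ ?_
  · have : Monotone (s.domRestrict (s.indicator f)) := fun x y hxy => by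
      simpa [indicator_of_mem x.2, indicator_of_mem y.2] using hf x.2 y.2 hxy
    exact this.measurable
  · have : sᶜ.domRestrict (s.indicator f) = 0 := by
      ext x
      exact indicator_of_notMem x.2 f
    rw [this]
    exact measurable_const

theorem Set.OrdConnected.measurable_indicator_of_antitoneOn (hs : s.OrdConnected)
    (hf : AntitoneOn f s) : Measurable (s.indicator f) :=
  Set.OrdConnected.measurable_indicator_of_monotoneOn (α := αᵒᵈ) hs hf

end IndicatorMonotoneOn

theorem measurable_integral_ite_le {μ : Measure ℝ} {h k : ℝ → ℝ} (hh : 0 ≤ h) (hk : 0 ≤ k) :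
    Measurable fun y => ∫ τ, (if y ≤ τ then k τ else h τ) ∂μ := by
  set s : Set ℝ := {y | IntegrableOn h (Iio y) μ ∧ IntegrableOn k (Ici y) μ}
  have hs : s.OrdConnected := ⟨fun x hx z hz y hy =>
    ⟨hz.1.mono_set (Iio_subset_Iio hy.2), hx.2.mono_set (Ici_subset_Ici.2 hy.1)⟩⟩
  have hmono : MonotoneOn (fun y => ∫ τ in Iio y, h τ ∂μ) s := fun x _ z hz hxz =>
    setIntegral_mono_set hz.1 (.of_forall hh) (.of_forall (Iio_subset_Iio hxz))
  have hanti : AntitoneOn (fun y => ∫ τ in Ici y, k τ ∂μ) s := fun x hx z _ hxz =>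
    setIntegral_mono_set hx.2 (.of_forall hk) (.of_forall (Ici_subset_Ici.2 hxz))
  have hsplit : ∀ y, ∫ τ, (if y ≤ τ then k τ else h τ) ∂μ =
      s.indicator (fun y => ∫ τ in Iio y, h τ ∂μ) y
        + s.indicator (fun y => ∫ τ in Ici y, k τ ∂μ) y := by
    intro y
    change ∫ τ, (Ici y).piecewise k h τ ∂μ = _
    by_cases hy : y ∈ s
    · rw [indicator_of_mem hy, indicator_of_mem hy, add_comm,
        integral_piecewise measurableSet_Ici hy.2 (by rw [compl_Ici]; exact hy.1), compl_Ici]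
    · rw [indicator_of_notMem hy, indicator_of_notMem hy, add_zero]
      refine integral_undef fun hi => hy ⟨?_, ?_⟩
      · exact hi.integrableOn.congr_fun
          (fun τ hτ => piecewise_eq_of_notMem _ _ _ (notMem_Ici.2 hτ)) measurableSet_Iio
      · exact hi.integrableOn.congr_fun
          (fun τ hτ => piecewise_eq_of_mem _ _ _ hτ) measurableSet_Ici
  simp_rw [hsplit]
  exact (hs.measurable_indicator_of_monotoneOn hmono).add
    (hs.measurable_indicator_of_antitoneOn hanti)

noncomputable def integratedBrier (F : ℝ → ℝ) (τstar y : ℝ) : ℝ :=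
  ∫ τ in (0:ℝ)..τstar, ((if y ≤ τ then (1:ℝ) else 0) - F τ) ^ 2

theorem measurable_integratedBrier (F : ℝ → ℝ) (τstar : ℝ) :
    Measurable (integratedBrier F τstar) := by
  have hite : ∀ y τ, ((if y ≤ τ then (1:ℝ) else 0) - F τ) ^ 2 =
      if y ≤ τ then (1 - F τ) ^ 2 else (0 - F τ) ^ 2 := fun y τ =>
    apply_ite (fun x => (x - F τ) ^ 2) _ _ _
  unfold integratedBrier intervalIntegral
  simp only [hite]
  exact (measurable_integral_ite_le (fun _ => sq_nonneg _) fun _ => sq_nonneg _).sub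
    (measurable_integral_ite_le (fun _ => sq_nonneg _) fun _ => sq_nonneg _)

section Survival

variable {Ω : Type*} [MeasurableSpace Ω] {μ : Measure Ω} {Y C : Ω → ℝ}

theorem nullSingletonClass_map_of_density [IsFiniteMeasure μ] (hC : Measurable C) {f : ℝ → ℝ}
    (hf : ∀ s : Set ℝ, MeasurableSet s → (μ (C ⁻¹' s)).toReal = ∫ u in s, f u) :
    NullSingletonClass (μ.map C) := by
  refine ⟨fun y => ?_⟩
  have hy := hf {y} (measurableSet_singleton y)
  rw [setIntegral_measure_zero _ (measure_singleton y), ENNReal.toReal_eq_zero_iff] at hy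
  rw [Measure.map_apply hC (measurableSet_singleton y)]
  exact hy.resolve_right (measure_ne_top _ _)

theorem measureReal_map_Ici_of_nullSingleton (hC : Measurable C) [NullSingletonClass (μ.map C)]
    (y : ℝ) : (μ.map C).real (Ici y) = μ.real {ω | y < C ω} := by
  rw [measureReal_congr Ioi_ae_eq_Ici.symm, map_measureReal_apply hC measurableSet_Ioi]
  rfl

theorem integral_ite_le_mul_div_survival [IsFiniteMeasure μ] (hY : Measurable Y)
    (hC : Measurable C) (hindep : IndepFun Y C μ) [NullSingletonClass (μ.map C)]
    {SC : ℝ → ℝ} (hSC : ∀ t, SC t = (μ {ω | t < C ω}).toReal) (hSC0 : ∀ t, SC t ≠ 0)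
    {g : ℝ → ℝ} (hg : Measurable g)
    (hint : Integrable (fun ω => (if Y ω ≤ C ω then (1:ℝ) else 0) * g (Y ω) / SC (Y ω)) μ) :
    ∫ ω, (if Y ω ≤ C ω then (1:ℝ) else 0) * g (Y ω) / SC (Y ω) ∂μ = ∫ ω, g (Y ω) ∂μ := by
  set Φ : ℝ × ℝ → ℝ := fun p => (if p.1 ≤ p.2 then (1:ℝ) else 0) * g p.1 / SC p.1
  have hSCm : Measurable SC := by
    refine Antitone.measurable fun a b hab => ?_
    rw [hSC a, hSC b]
    exact ENNReal.toReal_mono (measure_ne_top _ _) (measure_mono fun ω hω => hab.trans_lt hω)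
  have hΦ : Measurable Φ :=
    ((Measurable.ite (measurableSet_le measurable_fst measurable_snd) measurable_const
      measurable_const).mul (hg.comp measurable_fst)).div (hSCm.comp measurable_fst)
  have hYC : AEMeasurable (fun ω => (Y ω, C ω)) μ := (hY.prodMk hC).aemeasurable
  have hjoint : μ.map (fun ω => (Y ω, C ω)) = (μ.map Y).prod (μ.map C) :=
    (indepFun_iff_map_prod_eq_prod_map_map hY.aemeasurable hC.aemeasurable).mp hindep
  have hinner : ∀ y, ∫ c, Φ (y, c) ∂(μ.map C) = g y := by
    intro y
    have : (fun c => Φ (y, c)) = fun c => (Ici y).indicator 1 c * (g y / SC y) := by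
      ext c
      by_cases hc : y ≤ c <;> simp [Φ, hc]
    rw [this, integral_mul_const, integral_indicator_one measurableSet_Ici,
      measureReal_map_Ici_of_nullSingleton hC, measureReal_def, ← hSC,
      mul_div_cancel₀ _ (hSC0 y)]
  calc ∫ ω, Φ (Y ω, C ω) ∂μ
      = ∫ p, Φ p ∂((μ.map Y).prod (μ.map C)) := by
        rw [← hjoint, integral_map hYC hΦ.aestronglyMeasurable]
    _ = ∫ y, ∫ c, Φ (y, c) ∂(μ.map C) ∂(μ.map Y) := by
        refine integral_prod Φ ?_
        rwa [← hjoint, integrable_map_measure hΦ.aestronglyMeasurable hYC]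
    _ = ∫ ω, g (Y ω) ∂μ := by
        simp_rw [hinner]
        exact integral_map hY.aemeasurable hg.aestronglyMeasurable

end Survival

theorem stmt_19_general {Ω : Type*} [MeasureSpace Ω] [IsProbabilityMeasure (ℙ : Measure Ω)]
    (Y C : Ω → ℝ) (hY : Measurable Y) (hC : Measurable C)
    (hindep : IndepFun Y C ℙ)
    (fC : ℝ → ℝ)
    (hfC : ∀ s : Set ℝ, MeasurableSet s → (ℙ (C ⁻¹' s)).toReal = ∫ u in s, fC u)
    (SC : ℝ → ℝ) (hSC : ∀ t, SC t = (ℙ {ω | t < C ω}).toReal)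
    (hSCpos : ∀ t, 0 < SC t)
    (Fp : ℝ → ℝ) (τstar : ℝ)
    (hint : Integrable (fun ω =>
      (if Y ω ≤ C ω then (1:ℝ) else 0)
        * (∫ τ in (0:ℝ)..τstar, ((if min (Y ω) (C ω) ≤ τ then (1:ℝ) else 0) - Fp τ) ^ 2)
        / SC (min (Y ω) (C ω))) ℙ) :
    ∫ ω, (if Y ω ≤ C ω then (1:ℝ) else 0)
        * (∫ τ in (0:ℝ)..τstar, ((if min (Y ω) (C ω) ≤ τ then (1:ℝ) else 0) - Fp τ) ^ 2)
        / SC (min (Y ω) (C ω)) ∂ℙ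
      = ∫ ω, ∫ τ in (0:ℝ)..τstar, ((if Y ω ≤ τ then (1:ℝ) else 0) - Fp τ) ^ 2 ∂ℙ := by
  have := nullSingletonClass_map_of_density hC hfC
  have hcensored : ∀ ω, (if Y ω ≤ C ω then (1:ℝ) else 0)
      * integratedBrier Fp τstar (min (Y ω) (C ω)) / SC (min (Y ω) (C ω))
      = (if Y ω ≤ C ω then (1:ℝ) else 0) * integratedBrier Fp τstar (Y ω) / SC (Y ω) := by
    intro ω
    by_cases h : Y ω ≤ C ω <;> simp [h]
  change ∫ ω, (if Y ω ≤ C ω then (1:ℝ) else 0)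
      * integratedBrier Fp τstar (min (Y ω) (C ω)) / SC (min (Y ω) (C ω)) ∂ℙ = _
  rw [integral_congr_ae (.of_forall hcensored)]
  exact integral_ite_le_mul_div_survival hY hC hindep hSC (fun t => (hSCpos t).ne')
    (measurable_integratedBrier Fp τstar) (hint.congr (.of_forall hcensored))

/-- The expected RISBS with the true censoring weight `S_C` equals the expected
uncensored integrated Brier score: with `Y ⊥ C` nonnegative absolutely continuous,
`T = min(Y,C)`, `Δ = 𝟙(Y ≤ C)`,
`E[Δ·∫_0^{τ*}(𝟙(T ≤ τ) - F_p(τ))² dτ / S_C(T)]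
  = E[∫_0^{τ*}(𝟙(Y ≤ τ) - F_p(τ))² dτ]`. -/
theorem stmt_19 {Ω : Type*} [MeasureSpace Ω] [IsProbabilityMeasure (ℙ : Measure Ω)]
    (Y C : Ω → ℝ) (hY : Measurable Y) (hC : Measurable C)
    (hYnn : ∀ ω, 0 ≤ Y ω) (hCnn : ∀ ω, 0 ≤ C ω)
    (hindep : IndepFun Y C ℙ)
    (fY fC : ℝ → ℝ)
    (hfY : ∀ s : Set ℝ, MeasurableSet s → (ℙ (Y ⁻¹' s)).toReal = ∫ u in s, fY u)
    (hfC : ∀ s : Set ℝ, MeasurableSet s → (ℙ (C ⁻¹' s)).toReal = ∫ u in s, fC u)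
    (SC : ℝ → ℝ) (hSC : ∀ t, SC t = (ℙ {ω | t < C ω}).toReal)
    (hSCpos : ∀ t, 0 < SC t)
    (Fp : ℝ → ℝ) (τstar : ℝ) (hτ : 0 < τstar)
    (hint : Integrable (fun ω =>
      (if Y ω ≤ C ω then (1:ℝ) else 0)
        * (∫ τ in (0:ℝ)..τstar, ((if min (Y ω) (C ω) ≤ τ then (1:ℝ) else 0) - Fp τ) ^ 2)
        / SC (min (Y ω) (C ω))) ℙ) :
    ∫ ω, (if Y ω ≤ C ω then (1:ℝ) else 0)
        * (∫ τ in (0:ℝ)..τstar, ((if min (Y ω) (C ω) ≤ τ then (1:ℝ) else 0) - Fp τ) ^ 2)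
        / SC (min (Y ω) (C ω)) ∂ℙ
      = ∫ ω, ∫ τ in (0:ℝ)..τstar, ((if Y ω ≤ τ then (1:ℝ) else 0) - Fp τ) ^ 2 ∂ℙ :=
  stmt_19_general Y C hY hC hindep fC hfC SC hSC hSCpos Fp τstar hint
end
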